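/- arXiv:1910.13994 — 5 statements merged into one kernel-verified Lean document; each statement's English description precedes it below -/
import Mathlib

section
/- Let f be a polynomial with complex coefficients such that |f(z)| > 2 for all z on the unit circle. Then for all positive integers n and r with n > r + deg f, the polynomial h(z) = 1 + z^r·f(z) + z^n has exactly N(f) + r zeros in the open unit disk (with multiplicity) and no zeros on the unit circle. -/
/-!
On the unit circle `‖1 + z ^ n‖ ≤ 2 < ‖f z‖ = ‖z ^ r * f z‖`, so by Rouché's theorem
`h = z ^ r * f + (1 + z ^ n)` has no zeros there and as many zeros in the disk as `z ^ r * f`,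
namely `N(f) + r`.

Rouché's theorem comes from the argument principle. If `‖F - G‖ < ‖G‖` on a circle, then `F / G`
maps the circle into the disk of radius `1` about `1`, where `log` is holomorphic; so
`log (F / G)` is a primitive of `F'/F - G'/G` along the circle and the two logarithmic
derivatives have the same circle integral. For a polynomial, `p'/p = ∑ 1 / (z - a)` over its
roots, and the integral of each term is `2πi` or `0` according as `a` lies inside or outside.
-/

open Polynomial

/-- Number of zeros of a polynomial in the open unit disk, counted with multiplicity. -/
noncomputable def diskZeros (h : Polynomial ℂ) : ℕ :=
  (h.roots.filter (fun z => ‖z‖ < 1)).card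

open Metric Complex Real

theorem circleIntegral_sub_inv_of_notMem_closedBall {c w : ℂ} {R : ℝ} (hR : 0 ≤ R)
    (hw : w ∉ closedBall c R) : (∮ z in C(c, R), (z - w)⁻¹) = 0 := by
  have hne : ∀ z ∈ closedBall c R, z - w ≠ 0 := fun z hz h ↦ hw (sub_eq_zero.1 h ▸ hz)
  refine circleIntegral_eq_zero_of_differentiable_on_off_countable hR Set.countable_empty
    (ContinuousOn.inv₀ (by fun_prop) hne) fun z hz ↦ ?_
  exact (DifferentiableAt.sub_const (𝕜 := ℂ) differentiableAt_id w).inv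
    (hne z (ball_subset_closedBall hz.1))

theorem circleIntegrable_sub_inv_of_notMem_sphere {c w : ℂ} {R : ℝ} (hR : 0 ≤ R)
    (hw : w ∉ sphere c R) : CircleIntegrable (fun z ↦ (z - w)⁻¹) c R :=
  (ContinuousOn.inv₀ (by fun_prop) fun z hz h ↦
    hw (by rwa [← sub_eq_zero.1 h])).circleIntegrable hR

theorem circleIntegrable_multiset_sum_sub_inv {c : ℂ} {R : ℝ} (hR : 0 ≤ R) (s : Multiset ℂ)
    (hs : ∀ a ∈ s, a ∉ sphere c R) :
    CircleIntegrable (fun z ↦ (s.map fun a ↦ (z - a)⁻¹).sum) c R := by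
  induction s using Multiset.induction_on with
  | empty => simp
  | cons a s ih =>
    simp only [Multiset.map_cons, Multiset.sum_cons]
    exact (circleIntegrable_sub_inv_of_notMem_sphere hR (hs a (s.mem_cons_self a))).add
      (ih fun b hb ↦ hs b (Multiset.mem_cons_of_mem hb))

theorem circleIntegral_multiset_sum_sub_inv {c : ℂ} {R : ℝ} (hR : 0 ≤ R) (s : Multiset ℂ)
    (hs : ∀ a ∈ s, a ∉ sphere c R) :
    (∮ z in C(c, R), (s.map fun a ↦ (z - a)⁻¹).sum)
      = 2 * π * I * (s.filter fun a ↦ dist a c < R).card := by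
  induction s using Multiset.induction_on with
  | empty => simp [circleIntegral]
  | cons a s ih =>
    have ha : a ∉ sphere c R := hs a (s.mem_cons_self a)
    have hrest : ∀ b ∈ s, b ∉ sphere c R := fun b hb ↦ hs b (Multiset.mem_cons_of_mem hb)
    simp only [Multiset.map_cons, Multiset.sum_cons]
    rw [circleIntegral.integral_add (circleIntegrable_sub_inv_of_notMem_sphere hR ha)
      (circleIntegrable_multiset_sum_sub_inv hR s hrest), ih hrest]
    by_cases hab : dist a c < R
    · rw [circleIntegral.integral_sub_inv_of_mem_ball hab, Multiset.filter_cons_of_pos s hab,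
        Multiset.card_cons]
      push_cast; ring
    · have : a ∉ closedBall c R := fun h ↦ ha (mem_sphere.2 (le_antisymm h (not_lt.1 hab)))
      rw [circleIntegral_sub_inv_of_notMem_closedBall hR this, Multiset.filter_cons_of_neg s hab,
        zero_add]

theorem circleIntegral_logDeriv_eval {c : ℂ} {R : ℝ} (hR : 0 ≤ R) (p : ℂ[X])
    (hp : ∀ z ∈ sphere c R, p.eval z ≠ 0) :
    (∮ z in C(c, R), logDeriv (fun w ↦ p.eval w) z)
      = 2 * π * I * (p.roots.filter fun a ↦ dist a c < R).card := by
  have hroots : ∀ a ∈ p.roots, a ∉ sphere c R := fun a ha hs ↦ hp a hs (isRoot_of_mem_roots ha)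
  rw [← circleIntegral_multiset_sum_sub_inv hR _ hroots]
  refine circleIntegral.integral_congr hR fun z hz ↦ ?_
  simp only [logDeriv_apply, Polynomial.deriv,
    (IsAlgClosed.splits p).eval_derivative_div_eval_of_ne_zero (hp z hz), one_div]

theorem left_ne_zero_of_norm_sub_lt_norm {E : Type*} [SeminormedAddCommGroup E] {a b : E}
    (h : ‖a - b‖ < ‖b‖) : a ≠ 0 := by
  rintro rfl
  simp at h

theorem right_ne_zero_of_norm_sub_lt_norm {E : Type*} [NormedAddCommGroup E] {a b : E}
    (h : ‖a - b‖ < ‖b‖) : b ≠ 0 :=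
  norm_pos_iff.1 ((norm_nonneg _).trans_lt h)

theorem circleIntegrable_logDeriv {f : ℂ → ℂ} {c : ℂ} {R : ℝ} (hR : 0 ≤ R)
    (hf : Differentiable ℂ f) (h : ∀ z ∈ sphere c R, f z ≠ 0) :
    CircleIntegrable (logDeriv f) c R :=
  (((hf.contDiff (n := 1)).continuous_deriv le_rfl).continuousOn.div
    hf.continuous.continuousOn h).circleIntegrable hR

theorem circleIntegral_logDeriv_eq_of_norm_sub_lt {f g : ℂ → ℂ} {c : ℂ} {R : ℝ} (hR : 0 ≤ R)
    (hf : Differentiable ℂ f) (hg : Differentiable ℂ g)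
    (h : ∀ z ∈ sphere c R, ‖f z - g z‖ < ‖g z‖) :
    (∮ z in C(c, R), logDeriv f z) = ∮ z in C(c, R), logDeriv g z := by
  have hf0 : ∀ z ∈ sphere c R, f z ≠ 0 := fun z hz ↦ left_ne_zero_of_norm_sub_lt_norm (h z hz)
  have hg0 : ∀ z ∈ sphere c R, g z ≠ 0 := fun z hz ↦ right_ne_zero_of_norm_sub_lt_norm (h z hz)
  have hslit : ∀ z ∈ sphere c R, f z / g z ∈ slitPlane := fun z hz ↦ by
    have hq : f z / g z = 1 + (f z - g z) / g z := by field_simp [hg0 z hz]; ring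
    rw [hq]
    refine mem_slitPlane_of_norm_lt_one ?_
    rw [norm_div, div_lt_one (norm_pos_iff.2 (hg0 z hz))]
    exact h z hz
  have hlog : ∀ z ∈ sphere c R, HasDerivWithinAt (fun z ↦ log (f z / g z))
      (logDeriv f z - logDeriv g z) (sphere c R) z := fun z hz ↦ by
    rw [← logDeriv_div z (hf0 z hz) (hg0 z hz) (hf z) (hg z)]
    exact (((hf z).div (hg z) (hg0 z hz)).hasDerivAt.clog (hslit z hz)).hasDerivWithinAt
  rw [← sub_eq_zero, ← circleIntegral.integral_sub (circleIntegrable_logDeriv hR hf hf0)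
    (circleIntegrable_logDeriv hR hg hg0)]
  exact circleIntegral.integral_eq_zero_of_hasDerivWithinAt hR hlog

theorem card_roots_filter_dist_lt_eq_of_norm_sub_lt {c : ℂ} {R : ℝ} (hR : 0 ≤ R) {p q : ℂ[X]}
    (h : ∀ z ∈ sphere c R, ‖p.eval z - q.eval z‖ < ‖q.eval z‖) :
    (p.roots.filter fun a ↦ dist a c < R).card = (q.roots.filter fun a ↦ dist a c < R).card := by
  have hargument := circleIntegral_logDeriv_eq_of_norm_sub_lt hR p.differentiable
    q.differentiable h
  rw [circleIntegral_logDeriv_eval hR p fun z hz ↦ left_ne_zero_of_norm_sub_lt_norm (h z hz),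
    circleIntegral_logDeriv_eval hR q fun z hz ↦ right_ne_zero_of_norm_sub_lt_norm (h z hz)]
    at hargument
  exact_mod_cast mul_left_cancel₀ two_pi_I_ne_zero hargument

theorem diskZeros_eq_card_roots_filter_dist_lt (p : ℂ[X]) :
    diskZeros p = (p.roots.filter fun a ↦ dist a 0 < 1).card := by
  simp only [diskZeros, dist_zero_right]

theorem diskZeros_eq_of_norm_sub_lt {p q : ℂ[X]}
    (h : ∀ z : ℂ, ‖z‖ = 1 → ‖p.eval z - q.eval z‖ < ‖q.eval z‖) :
    diskZeros p = diskZeros q := by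
  simpa only [diskZeros_eq_card_roots_filter_dist_lt] using
    card_roots_filter_dist_lt_eq_of_norm_sub_lt zero_le_one fun z hz ↦ h z (by simpa using hz)

theorem diskZeros_X_pow_mul {f : ℂ[X]} (hf : f ≠ 0) (r : ℕ) :
    diskZeros (X ^ r * f) = r + diskZeros f := by
  rw [diskZeros, diskZeros, roots_mul (mul_ne_zero (pow_ne_zero r X_ne_zero) hf), roots_X_pow,
    Multiset.filter_add, Multiset.filter_nsmul, Multiset.card_add]
  simp [Multiset.filter_singleton]

theorem stmt_1_general (f : Polynomial ℂ)
    (hf : ∀ z : ℂ, ‖z‖ = 1 → 2 < ‖f.eval z‖)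
    (n r : ℕ) :
    diskZeros (1 + X ^ r * f + X ^ n) = diskZeros f + r ∧
      ∀ z : ℂ, ‖z‖ = 1 → (1 + X ^ r * f + X ^ n).eval z ≠ 0 := by
  have hf0 : f ≠ 0 := by
    rintro rfl
    exact absurd (hf 1 norm_one) (by norm_num)
  have hdominant : ∀ z : ℂ, ‖z‖ = 1 →
      ‖(1 + X ^ r * f + X ^ n).eval z - (X ^ r * f).eval z‖ < ‖(X ^ r * f).eval z‖ := by
    intro z hz
    calc ‖(1 + X ^ r * f + X ^ n).eval z - (X ^ r * f).eval z‖ = ‖1 + z ^ n‖ := by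
          simp only [eval_add, eval_one, eval_mul, eval_pow, eval_X]
          congr 1
          ring
      _ ≤ 2 := by
          refine (norm_add_le _ _).trans ?_
          rw [norm_one, norm_pow, hz, one_pow]; norm_num
      _ < ‖f.eval z‖ := hf z hz
      _ = ‖(X ^ r * f).eval z‖ := by simp [hz]
  refine ⟨?_, fun z hz ↦ left_ne_zero_of_norm_sub_lt_norm (hdominant z hz)⟩
  rw [diskZeros_eq_of_norm_sub_lt hdominant, diskZeros_X_pow_mul hf0, add_comm]

theorem stmt_1 (f : Polynomial ℂ)
    (hf : ∀ z : ℂ, ‖z‖ = 1 → 2 < ‖f.eval z‖)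
    (n r : ℕ) (hn : 0 < n) (hr : 0 < r) (hnr : r + f.natDegree < n) :
    diskZeros (1 + X ^ r * f + X ^ n) = diskZeros f + r ∧
      ∀ z : ℂ, ‖z‖ = 1 → (1 + X ^ r * f + X ^ n).eval z ≠ 0 :=
  stmt_1_general f hf n r
end

section
/- Let f(z) = 1 − z + z² − 2z^{2+3m}(1+z) for a positive integer m, and g(z) = 1 + z + z². Then |f(z)| ≥ |g(z)| for all z on the unit circle, with equality only at z = 1 and z = e^{±2πi/3}. -/
/-!
On the unit circle `conj z = z⁻¹`. Put `w = z ^ (3 * m)`, so that `f(z) = (1 - z + z²) - 2z²w(1 + z)`.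
Expanding `|f(z)|²`, the cross term collapses because `(1 - z + z²)(1 + z̄)z̄² = 1 + z̄³`, and
`|1 - z + z²|² + 4|1 + z|² - |1 + z + z²|² = 8`, giving
`|f(z)|² = |g(z)|² + 8 - 4 Re(w + wz³)`.
As `w` and `wz³` lie on the unit circle, `Re(w + wz³) ≤ 2`, with equality only if `w = wz³ = 1`,
i.e. `z³ = 1`.
-/

open Polynomial ComplexConjugate

namespace Complex

lemma sq_norm_one_sub_add_sq_sub_eq {z w : ℂ} (hz : ‖z‖ = 1) (hw : ‖w‖ = 1) :
    ‖1 - z + z ^ 2 - 2 * (z ^ 2 * w) * (1 + z)‖ ^ 2 =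
      ‖1 + z + z ^ 2‖ ^ 2 + 8 - 4 * (w * (1 + z ^ 3)).re := by
  have hz0 : z ≠ 0 := norm_ne_zero_iff.mp (by simp [hz])
  have hw0 : w ≠ 0 := norm_ne_zero_iff.mp (by simp [hw])
  apply ofReal_injective
  push_cast
  simp only [← mul_conj', re_eq_add_conj, map_add, map_sub, map_mul, map_pow, map_one, map_ofNat,
    ← inv_eq_conj hz, ← inv_eq_conj hw]
  field_simp
  ring

lemma re_mul_one_add_le_two {w u : ℂ} (hw : ‖w‖ = 1) (hu : ‖u‖ = 1) :
    (w * (1 + u)).re ≤ 2 := by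
  have hwu : ‖w * u‖ = 1 := by rw [norm_mul, hw, hu, one_mul]
  have h1 := hw ▸ re_le_norm w
  have h2 := hwu ▸ re_le_norm (w * u)
  rw [mul_one_add, add_re]
  linarith

open scoped ComplexOrder in
lemma eq_one_of_norm_eq_one_of_re_eq_one {u : ℂ} (hu : ‖u‖ = 1) (hre : u.re = 1) : u = 1 := by
  have hu0 : 0 ≤ u := re_eq_norm.mp (by rw [hu, hre])
  exact ext hre (nonneg_iff.mp hu0).2.symm

lemma eq_one_of_re_mul_one_add_eq_two {w u : ℂ} (hw : ‖w‖ = 1) (hu : ‖u‖ = 1)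
    (h : (w * (1 + u)).re = 2) : u = 1 := by
  have hwu : ‖w * u‖ = 1 := by rw [norm_mul, hw, hu, one_mul]
  have h1 := hw ▸ re_le_norm w
  have h2 := hwu ▸ re_le_norm (w * u)
  rw [mul_one_add, add_re] at h
  have hw1 : w = 1 := eq_one_of_norm_eq_one_of_re_eq_one hw (by linarith)
  simpa [hw1] using eq_one_of_norm_eq_one_of_re_eq_one hwu (by linarith)

lemma exp_two_pi_div_three_add_exp_neg :
    exp (2 * Real.pi * I / 3) + exp (-(2 * Real.pi * I / 3)) = -1 := by
  have hcos : Real.cos (2 * Real.pi / 3) = -(1 / 2) := by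
    rw [show 2 * Real.pi / 3 = Real.pi - Real.pi / 3 by ring, Real.cos_pi_sub,
      Real.cos_pi_div_three]
  calc exp (2 * Real.pi * I / 3) + exp (-(2 * Real.pi * I / 3))
      = exp ((2 * Real.pi / 3 : ℝ) * I) + exp (-(2 * Real.pi / 3 : ℝ) * I) := by
        push_cast; ring_nf
    _ = 2 * cos (2 * Real.pi / 3 : ℝ) := (two_cos _).symm
    _ = -1 := by rw [← ofReal_cos, hcos]; push_cast; ring

lemma eq_one_or_eq_exp_of_pow_three_eq_one {z : ℂ} (h : z ^ 3 = 1) :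
    z = 1 ∨ z = exp (2 * Real.pi * I / 3) ∨ z = exp (-(2 * Real.pi * I / 3)) := by
  have hprod : exp (2 * Real.pi * I / 3) * exp (-(2 * Real.pi * I / 3)) = 1 := by
    rw [← exp_add, add_neg_cancel, exp_zero]
  have hfactor :
      (z - 1) * ((z - exp (2 * Real.pi * I / 3)) * (z - exp (-(2 * Real.pi * I / 3)))) = 0 := by
    linear_combination h - (z - 1) * z * exp_two_pi_div_three_add_exp_neg + (z - 1) * hprod
  simpa [sub_eq_zero] using hfactor

end Complex

theorem stmt_7_general (m : ℕ) :
    ∀ z : ℂ, ‖z‖ = 1 →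
      ‖(1 + X + X ^ 2 : Polynomial ℂ).eval z‖ ≤
        ‖(1 - X + X ^ 2 - C 2 * X ^ (2 + 3 * m) * (1 + X) : Polynomial ℂ).eval z‖ ∧
      (‖(1 - X + X ^ 2 - C 2 * X ^ (2 + 3 * m) * (1 + X) : Polynomial ℂ).eval z‖ =
          ‖(1 + X + X ^ 2 : Polynomial ℂ).eval z‖ →
        z = 1 ∨ z = Complex.exp (2 * Real.pi * Complex.I / 3) ∨
          z = Complex.exp (-(2 * Real.pi * Complex.I / 3))) := by
  intro z hz
  have hw : ‖z ^ (3 * m)‖ = 1 := by rw [norm_pow, hz, one_pow]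
  have hz3 : ‖z ^ 3‖ = 1 := by rw [norm_pow, hz, one_pow]
  have key := Complex.sq_norm_one_sub_add_sq_sub_eq hz hw
  rw [← pow_add] at key
  have hle := Complex.re_mul_one_add_le_two hw hz3
  simp only [eval_add, eval_sub, eval_mul, eval_pow, eval_X, eval_one, eval_C]
  refine ⟨(pow_le_pow_iff_left₀ (norm_nonneg _) (norm_nonneg _) two_ne_zero).mp (by linarith),
    fun heq => Complex.eq_one_or_eq_exp_of_pow_three_eq_one ?_⟩
  refine Complex.eq_one_of_re_mul_one_add_eq_two hw hz3 ?_
  rw [heq] at key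
  linarith

theorem stmt_7 (m : ℕ) (hm : 1 ≤ m) :
    ∀ z : ℂ, ‖z‖ = 1 →
      ‖(1 + X + X ^ 2 : Polynomial ℂ).eval z‖ ≤
        ‖(1 - X + X ^ 2 - C 2 * X ^ (2 + 3 * m) * (1 + X) : Polynomial ℂ).eval z‖ ∧
      (‖(1 - X + X ^ 2 - C 2 * X ^ (2 + 3 * m) * (1 + X) : Polynomial ℂ).eval z‖ =
          ‖(1 + X + X ^ 2 : Polynomial ℂ).eval z‖ →
        z = 1 ∨ z = Complex.exp (2 * Real.pi * Complex.I / 3) ∨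
          z = Complex.exp (-(2 * Real.pi * Complex.I / 3))) :=
  stmt_7_general m
end

section
/- Suppose Newman polynomials f, g (polynomials with coefficients in {0,1} and constant term and leading coefficient 1) satisfy: f has no zeros on the unit circle, g has no zeros on the unit circle, N(f) = a, deg f = c, N(g) = b, deg g = d. For positive integers l, m with l > d·m, the polynomial h(z) = f(z^l)·g(z^m) is again a Newman polynomial, has no zeros on the unit circle, satisfies N(h) = a·l + b·m, and deg h = c·l + d·m. -/
/-! Since `deg g(z^m) = d m < l`, every exponent `n` of the product splits uniquely as
`l (n / l) + n % l` with the second part inside the support of `g(z^m)`, so the coefficient of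
`z^n` is the product of one coefficient of `f` and one of `g(z^m)`, hence lies in `{0,1}`.
The zeros of `f(z^l)` are the `l`-th roots of the zeros of `f`, and `|w| < 1` iff `|w^l| < 1`,
so `N(f(z^l)) = l N(f)`; zero counts add in products. -/

open Polynomial

/-- A Newman polynomial: coefficients in {0,1}, constant term 1, leading coefficient 1. -/
def IsNewman (h : Polynomial ℂ) : Prop :=
  (∀ j, h.coeff j = 0 ∨ h.coeff j = 1) ∧ h.coeff 0 = 1 ∧ h.leadingCoeff = 1

namespace Polynomial

theorem roots_expand_of_splits {K : Type*} [Field K] {f : K[X]} (hsplit : f.Splits) (hf : f ≠ 0)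
    {l : ℕ} (hl : 0 < l) : (expand K l f).roots = f.roots.bind (nthRoots l) := by
  have hprod : expand K l f = C f.leadingCoeff * (f.roots.map fun r => X ^ l - C r).prod := by
    conv_lhs => rw [hsplit.eq_prod_roots]
    simp [map_multiset_prod, Multiset.map_map]
  rw [hprod, roots_C_mul _ (leadingCoeff_ne_zero.mpr hf), roots_multiset_prod, Multiset.bind_map]
  · rfl
  simp [X_pow_sub_C_ne_zero hl]

theorem card_nthRoots_of_isAlgClosed {K : Type*} [Field K] [IsAlgClosed K] {l : ℕ} (r : K) :
    (nthRoots l r).card = l := by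
  rw [nthRoots, IsAlgClosed.card_roots_eq_natDegree, natDegree_X_pow_sub_C]

theorem coeff_expand_mul_of_natDegree_lt {R : Type*} [CommSemiring R] (f : R[X]) {q : R[X]}
    {l : ℕ} (hq : q.natDegree < l) (n : ℕ) :
    (expand R l f * q).coeff n = f.coeff (n / l) * q.coeff (n % l) := by
  have hl : 0 < l := (Nat.zero_le _).trans_lt hq
  rw [coeff_mul, Finset.sum_eq_single (l * (n / l), n % l)]
  · rw [coeff_expand_mul' hl]
  · rintro ⟨i, j⟩ hij hne
    rw [Finset.HasAntidiagonal.mem_antidiagonal] at hij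
    dsimp only at hij
    rw [coeff_expand hl]
    split_ifs with hdiv
    · obtain ⟨k, rfl⟩ := hdiv
      by_cases hj : q.coeff j = 0
      · rw [hj, mul_zero]
      · have hjl : j < l := (le_natDegree_of_ne_zero hj).trans_lt hq
        obtain ⟨hk, hjn⟩ := (Nat.div_mod_unique hl).mpr ⟨(add_comm _ _).trans hij, hjl⟩
        exact absurd (by rw [hk, hjn]) hne
    · rw [zero_mul]
  · exact fun h => (h (Finset.HasAntidiagonal.mem_antidiagonal.mpr (Nat.div_add_mod n l))).elim

end Polynomial

theorem norm_lt_one_iff_of_pow_eq {𝕜 : Type*} [NormedDivisionRing 𝕜] {z r : 𝕜} {l : ℕ}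
    (hl : l ≠ 0) (h : z ^ l = r) : ‖z‖ < 1 ↔ ‖r‖ < 1 := by
  rw [← h, norm_pow, pow_lt_one_iff_of_nonneg (norm_nonneg z) hl]

theorem diskZeros_mul {p q : ℂ[X]} (hpq : p * q ≠ 0) :
    diskZeros (p * q) = diskZeros p + diskZeros q := by
  rw [diskZeros, roots_mul hpq, Multiset.filter_add, Multiset.card_add]; rfl

theorem diskZeros_expand {f : ℂ[X]} (hf : f ≠ 0) {l : ℕ} (hl : 0 < l) :
    diskZeros (expand ℂ l f) = l * diskZeros f := by
  have hfilter : (expand ℂ l f).roots.filter (‖·‖ < 1) =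
      (f.roots.filter (‖·‖ < 1)).bind (nthRoots l) := by
    rw [roots_expand_of_splits (IsAlgClosed.splits f) hf hl, Multiset.filter_bind,
      Multiset.bind_filter]
    refine Multiset.bind_congr fun r _ => ?_
    split_ifs with hr
    · exact Multiset.filter_eq_self.mpr fun z hz =>
        (norm_lt_one_iff_of_pow_eq hl.ne' ((mem_nthRoots hl).mp hz)).mpr hr
    · exact Multiset.filter_eq_nil.mpr fun z hz =>
        mt (norm_lt_one_iff_of_pow_eq hl.ne' ((mem_nthRoots hl).mp hz)).mp hr
  rw [diskZeros, hfilter, Multiset.card_bind]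
  simp [card_nthRoots_of_isAlgClosed, diskZeros, mul_comm]

namespace IsNewman

theorem monic {f : ℂ[X]} (hf : IsNewman f) : f.Monic := hf.2.2

theorem expand {f : ℂ[X]} (hf : IsNewman f) {m : ℕ} (hm : 0 < m) :
    IsNewman (Polynomial.expand ℂ m f) := by
  refine ⟨fun j => ?_, ?_, hf.monic.expand hm⟩
  · rw [coeff_expand hm]
    split_ifs
    · exact hf.1 _
    · exact Or.inl rfl
  · rw [coeff_expand hm, if_pos (dvd_zero m), Nat.zero_div, hf.2.1]

theorem expand_mul {f q : ℂ[X]} (hf : IsNewman f) (hq : IsNewman q) {l : ℕ}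
    (hql : q.natDegree < l) : IsNewman (Polynomial.expand ℂ l f * q) := by
  have hl : 0 < l := (Nat.zero_le _).trans_lt hql
  refine ⟨fun j => ?_, ?_, (hf.monic.expand hl).mul hq.monic⟩
  · rw [coeff_expand_mul_of_natDegree_lt f hql]
    rcases hf.1 (j / l) with h | h <;> rcases hq.1 (j % l) with h' | h' <;> simp [h, h']
  · rw [coeff_expand_mul_of_natDegree_lt f hql, Nat.zero_div, Nat.zero_mod, hf.2.1, hq.2.1,
      mul_one]

end IsNewman

theorem stmt_11 (f g : Polynomial ℂ) (a b c d : ℕ)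
    (hf : IsNewman f) (hg : IsNewman g)
    (hfU : ∀ z : ℂ, ‖z‖ = 1 → f.eval z ≠ 0)
    (hgU : ∀ z : ℂ, ‖z‖ = 1 → g.eval z ≠ 0)
    (hNf : diskZeros f = a) (hdf : f.natDegree = c)
    (hNg : diskZeros g = b) (hdg : g.natDegree = d)
    (l m : ℕ) (hl : 0 < l) (hm : 0 < m) (hlm : d * m < l) :
    IsNewman (f.comp (X ^ l) * g.comp (X ^ m)) ∧
      (∀ z : ℂ, ‖z‖ = 1 → (f.comp (X ^ l) * g.comp (X ^ m)).eval z ≠ 0) ∧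
      diskZeros (f.comp (X ^ l) * g.comp (X ^ m)) = a * l + b * m ∧
      (f.comp (X ^ l) * g.comp (X ^ m)).natDegree = c * l + d * m := by
  simp only [← expand_eq_comp_X_pow]
  have hgl : (expand ℂ m g).natDegree < l := by rwa [natDegree_expand, hdg]
  have hh := hf.expand_mul (hg.expand hm) hgl
  refine ⟨hh, fun z hz => ?_, ?_, ?_⟩
  · rw [eval_mul, expand_eval, expand_eval]
    exact mul_ne_zero (hfU _ (by simp [hz])) (hgU _ (by simp [hz]))
  · rw [diskZeros_mul hh.monic.ne_zero, diskZeros_expand hf.monic.ne_zero hl,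
      diskZeros_expand hg.monic.ne_zero hm, hNf, hNg, mul_comm l, mul_comm m]
  · rw [(hf.monic.expand hl).natDegree_mul (hg.expand hm).monic, natDegree_expand,
      natDegree_expand, hdf, hdg]
end

section
/- No Newman polynomial of degree 6 (coefficients in {0,1}, constant term 1, leading coefficient 1) has exactly 3 zeros in the open unit disk and no zeros on the unit circle. -/
open Polynomial

/-!
The coefficients are nonnegative reals, so the roots are closed under conjugation and every
real root is negative. In `f(-1) = ∏ (-1 - a)` over the roots, conjugate pairs and real roots
below `-1` give positive factors, real roots in `(-1, 0)` negative ones. With no zero on the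
circle and three zeros in the disk, the non-real ones paired, an odd number of real roots lie
in `(-1, 0)`, so `f(-1) < 0`. Among Newman polynomials of degree 6 only `1 + z + z³ + z⁵ + z⁶`
has `f(-1) < 0`, and it vanishes on the circle: `z⁻³ (1 + z + z³ + z⁵ + z⁶) = w³ + w² - 3w - 1`
with `w = z + z⁻¹`, and this cubic has a root `w ∈ [0, 2]`.
-/

open ComplexConjugate
open scoped ComplexOrder

namespace Multiset

variable {M : Multiset ℂ}

lemma map_conj_filter (hM : M.map conj = M) {p : ℂ → Prop} [DecidablePred p]
    (hp : ∀ z, p (conj z) ↔ p z) : (M.filter p).map conj = M.filter p := by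
  conv_rhs => rw [← hM, filter_map]
  congr 1
  exact filter_congr fun z _ => (hp z).symm

lemma filter_im_ne_zero_eq_add_map_conj (hM : M.map conj = M) :
    M.filter (·.im ≠ 0) = M.filter (0 < ·.im) + (M.filter (0 < ·.im)).map conj := by
  have hlower : M.filter (·.im < 0) = (M.filter (0 < ·.im)).map conj := by
    conv_lhs => rw [← hM, filter_map]
    congr 1
    exact filter_congr fun z _ => by simp
  have hdisjoint : M.filter (fun z => 0 < z.im ∧ z.im < 0) = 0 :=
    filter_eq_nil.mpr fun z _ h => (h.1.trans h.2).false
  rw [← hlower, filter_add_filter, hdisjoint, add_zero]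
  exact filter_congr fun z _ => ne_comm.trans ne_iff_lt_or_gt

lemma even_card_filter_im_ne_zero (hM : M.map conj = M) :
    Even (card (M.filter (·.im ≠ 0))) := by
  rw [filter_im_ne_zero_eq_add_map_conj hM, card_add, card_map]
  exact ⟨_, rfl⟩

lemma neg_one_pow_mul_prod_sub_pos_of_forall_im_eq_zero {x : ℝ} (hx : (x : ℂ) ∉ M)
    (hM : ∀ a ∈ M, a.im = 0) :
    0 < (-1) ^ card (M.filter (x < ·.re)) * (M.map ((x : ℂ) - ·)).prod := by
  induction M using Multiset.induction_on with
  | empty => simp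
  | cons a M ih =>
    have him := hM a (mem_cons_self a M)
    have ha : a = (a.re : ℂ) := Complex.ext rfl him
    have hsub : (x : ℂ) - a = ((x - a.re : ℝ) : ℂ) := Complex.ext (by simp) (by simp [him])
    have hpos := ih (fun h => hx (mem_cons_of_mem h)) fun b hb => hM b (mem_cons_of_mem hb)
    have hne : a.re ≠ x := fun h => hx (h ▸ ha ▸ mem_cons_self a M)
    rw [map_cons, prod_cons]
    by_cases hxa : x < a.re
    · rw [filter_cons_of_pos (p := fun b : ℂ => x < b.re) _ hxa, card_cons, pow_succ]
      convert mul_pos hpos (Complex.zero_lt_real.mpr (sub_pos.mpr hxa)) using 1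
      rw [hsub]
      push_cast
      ring
    · rw [filter_cons_of_neg (p := fun b : ℂ => x < b.re) _ hxa]
      have hax : a.re < x := lt_of_le_of_ne (not_lt.mp hxa) hne
      convert mul_pos hpos (Complex.zero_lt_real.mpr (sub_pos.mpr hax)) using 1
      rw [hsub]
      push_cast
      ring

lemma prod_sub_pos_of_map_conj_eq (hM : M.map conj = M) (x : ℝ) :
    0 < ((M.filter (·.im ≠ 0)).map ((x : ℂ) - ·)).prod := by
  set U := M.filter (0 < ·.im)
  have hU : ((U.map conj).map ((x : ℂ) - ·)).prod = conj (U.map ((x : ℂ) - ·)).prod := by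
    rw [map_multiset_prod, map_map, map_map]
    congr 1
    exact map_congr rfl fun a _ => by simp
  have hne : (U.map ((x : ℂ) - ·)).prod ≠ 0 := prod_ne_zero fun h => by
    obtain ⟨a, ha, hxa⟩ := mem_map.mp h
    have := (mem_filter.mp ha).2
    rw [← sub_eq_zero.mp hxa] at this
    simp at this
  rw [filter_im_ne_zero_eq_add_map_conj hM, map_add, prod_add, hU, Complex.mul_conj]
  exact Complex.zero_lt_real.mpr (Complex.normSq_pos.mpr hne)

theorem neg_one_pow_mul_prod_sub_pos (hM : M.map conj = M) {x : ℝ} (hx : (x : ℂ) ∉ M) :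
    0 < (-1) ^ card (M.filter fun a => a.im = 0 ∧ x < a.re) * (M.map ((x : ℂ) - ·)).prod := by
  have hreal := neg_one_pow_mul_prod_sub_pos_of_forall_im_eq_zero (M := M.filter (·.im = 0))
    (x := x) (fun h => hx (mem_of_mem_filter h)) fun a ha => (mem_filter.mp ha).2
  have hcard : M.filter (fun a => a.im = 0 ∧ x < a.re) =
      (M.filter (·.im = 0)).filter (x < ·.re) := by
    rw [filter_filter]
    exact filter_congr fun a _ => and_comm
  have hprod : (M.map ((x : ℂ) - ·)).prod = ((M.filter (·.im = 0)).map ((x : ℂ) - ·)).prod *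
      ((M.filter (·.im ≠ 0)).map ((x : ℂ) - ·)).prod := by
    rw [← prod_add, ← map_add, filter_add_not]
  rw [hcard, hprod, ← mul_assoc]
  exact mul_pos hreal (prod_sub_pos_of_map_conj_eq hM x)

end Multiset

namespace Complex

lemma exists_norm_eq_one_add_inv_eq {t : ℝ} (ht : |t| ≤ 2) :
    ∃ z : ℂ, ‖z‖ = 1 ∧ z + z⁻¹ = t := by
  have h4 : 0 ≤ 4 - t ^ 2 := by nlinarith [sq_abs t, abs_nonneg t]
  set z : ℂ := ⟨t / 2, √(4 - t ^ 2) / 2⟩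
  have hz : normSq z = 1 := by
    rw [normSq_mk]
    nlinarith [Real.sq_sqrt h4]
  refine ⟨z, by rw [norm_def, hz, Real.sqrt_one], ?_⟩
  rw [inv_def, hz, inv_one, ofReal_one, mul_one, add_conj]
  push_cast [z]
  ring

lemma exists_norm_eq_one_sextic_eq_zero :
    ∃ z : ℂ, ‖z‖ = 1 ∧ 1 + z + z ^ 3 + z ^ 5 + z ^ 6 = 0 := by
  obtain ⟨t, ⟨ht0, ht2⟩, ht⟩ :
      ∃ t ∈ Set.Icc (0 : ℝ) 2, t ^ 3 + t ^ 2 - 3 * t - 1 = 0 :=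
    intermediate_value_Icc (by norm_num) (by fun_prop) (by norm_num)
  obtain ⟨z, hz, hzt⟩ := exists_norm_eq_one_add_inv_eq (abs_le.mpr ⟨by linarith, ht2⟩)
  have hz0 : z ≠ 0 := norm_ne_zero_iff.mp (by simp [hz])
  refine ⟨z, hz, ?_⟩
  calc 1 + z + z ^ 3 + z ^ 5 + z ^ 6
      = z ^ 3 * ((z + z⁻¹) ^ 3 + (z + z⁻¹) ^ 2 - 3 * (z + z⁻¹) - 1) := by field_simp; ring
    _ = 0 := by
      have ht' : (t : ℂ) ^ 3 + (t : ℂ) ^ 2 - 3 * t - 1 = 0 := by exact_mod_cast ht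
      rw [hzt, ht', mul_zero]

end Complex

namespace Polynomial

variable {f : ℂ[X]}

lemma map_conj_eq_self_of_coeff_nonneg (hf : ∀ j, 0 ≤ f.coeff j) : f.map conj = f := by
  ext j
  rw [coeff_map]
  exact Complex.conj_eq_iff_im.mpr (Complex.nonneg_iff.mp (hf j)).2.symm

lemma map_conj_roots (hf : f.map conj = f) : f.roots.map conj = f.roots := by
  rw [← (IsAlgClosed.splits f).roots_map, hf]

lemma eval_ofReal_pos_of_coeff_nonneg (hf : ∀ j, 0 ≤ f.coeff j) (h0 : 0 < f.coeff 0) {x : ℝ}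
    (hx : 0 ≤ x) : 0 < f.eval (x : ℂ) := by
  rw [eval_eq_sum_range]
  exact Finset.sum_pos' (fun i _ => mul_nonneg (hf i) (pow_nonneg (Complex.zero_le_real.mpr hx) i))
    ⟨0, by simp, by simpa using h0⟩

lemma re_neg_of_mem_roots_of_im_eq_zero (hf : ∀ j, 0 ≤ f.coeff j) (h0 : 0 < f.coeff 0)
    {a : ℂ} (ha : a ∈ f.roots) (him : a.im = 0) : a.re < 0 := by
  by_contra! hre
  have hpos := eval_ofReal_pos_of_coeff_nonneg hf h0 hre
  rw [show (a.re : ℂ) = a from Complex.ext rfl him.symm, isRoot_of_mem_roots ha] at hpos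
  exact hpos.false

lemma odd_card_filter_im_eq_zero_of_odd_diskZeros (hM : f.roots.map conj = f.roots)
    (hodd : Odd (diskZeros f)) :
    Odd (Multiset.card ((f.roots.filter (‖·‖ < 1)).filter (·.im = 0))) := by
  have hD : (f.roots.filter (‖·‖ < 1)).map conj = f.roots.filter (‖·‖ < 1) :=
    Multiset.map_conj_filter hM fun z => by simp
  rw [diskZeros, ← Multiset.filter_add_not (·.im = 0) (f.roots.filter (‖·‖ < 1)),
    Multiset.card_add, Nat.odd_add] at hodd
  exact hodd.mpr (Multiset.even_card_filter_im_ne_zero hD)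

theorem eval_neg_one_neg_of_odd_diskZeros (hm : f.Monic) (hf : ∀ j, 0 ≤ f.coeff j)
    (h0 : 0 < f.coeff 0) (hroot : ¬ f.IsRoot (-1)) (hodd : Odd (diskZeros f)) :
    f.eval (-1) < 0 := by
  have hM := map_conj_roots (map_conj_eq_self_of_coeff_nonneg hf)
  have hx : ((-1 : ℝ) : ℂ) ∉ f.roots := fun h => hroot (by simpa using isRoot_of_mem_roots h)
  have hreal : f.roots.filter (fun a => a.im = 0 ∧ -1 < a.re) =
      (f.roots.filter (‖·‖ < 1)).filter (·.im = 0) := by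
    rw [Multiset.filter_filter]
    refine Multiset.filter_congr fun a ha => and_congr_right fun him => ?_
    rw [← Complex.abs_re_eq_norm.mpr him,
      abs_of_neg (re_neg_of_mem_roots_of_im_eq_zero hf h0 ha him), neg_lt]
  have hsign := Multiset.neg_one_pow_mul_prod_sub_pos hM hx
  rw [hreal, (odd_card_filter_im_eq_zero_of_odd_diskZeros hM hodd).neg_one_pow,
    Complex.ofReal_neg, Complex.ofReal_one,
    ← (IsAlgClosed.splits f).eval_eq_prod_roots_of_monic hm] at hsign
  simpa using hsign

lemma eval_eq_of_coeff_mem_zero_one_of_eval_neg_one_neg (hdeg : f.natDegree = 6)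
    (h0 : f.coeff 0 = 1) (h6 : f.coeff 6 = 1) (hcoeff : ∀ j, f.coeff j = 0 ∨ f.coeff j = 1)
    (hneg : f.eval (-1) < 0) (z : ℂ) : f.eval z = 1 + z + z ^ 3 + z ^ 5 + z ^ 6 := by
  have hre := (Complex.neg_iff.mp hneg).1
  simp only [eval_eq_sum_range, hdeg, Finset.sum_range_succ, Finset.sum_range_zero, h0, h6]
    at hre ⊢
  rcases hcoeff 1 with h1 | h1 <;> rcases hcoeff 2 with h2 | h2 <;>
    rcases hcoeff 3 with h3 | h3 <;> rcases hcoeff 4 with h4 | h4 <;>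
    rcases hcoeff 5 with h5 | h5 <;> simp only [h1, h2, h3, h4, h5] at hre ⊢ <;>
    norm_num at hre
  ring

end Polynomial

theorem stmt_14 (f : Polynomial ℂ)
    (hdeg : f.natDegree = 6)
    (h0 : f.coeff 0 = 1) (h6 : f.coeff 6 = 1)
    (hcoeff : ∀ j, f.coeff j = 0 ∨ f.coeff j = 1) :
    ¬ (diskZeros f = 3 ∧ ∀ z : ℂ, ‖z‖ = 1 → f.eval z ≠ 0) := by
  rintro ⟨hdisk, hcircle⟩
  have hm : f.Monic := by rw [Monic, leadingCoeff, hdeg, h6]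
  have hnonneg : ∀ j, 0 ≤ f.coeff j := fun j => by rcases hcoeff j with h | h <;> simp [h]
  have hneg : f.eval (-1) < 0 :=
    eval_neg_one_neg_of_odd_diskZeros hm hnonneg (by simp [h0]) (hcircle (-1) (by simp))
      (hdisk ▸ by decide)
  obtain ⟨z, hz, hz0⟩ := Complex.exists_norm_eq_one_sextic_eq_zero
  have hf := eval_eq_of_coeff_mem_zero_one_of_eval_neg_one_neg hdeg h0 h6 hcoeff hneg z
  exact hcircle z hz (hf.trans hz0)
end

section
/- For every positive integer m, the Littlewood polynomial h(z) with coefficient pattern ++−−−...− (1, 1 followed by 2m+1 coefficients −1), i.e. h(z) = (1 − 2z² + z^{3+2m})/(1 − z), has exactly 2 zeros in the open unit disk and no zeros on the unit circle. -/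
/-! Write `g(z) = (1 - z) h(z) = 1 - 2z² + zⁿ` (`littlewoodNumerator n`) with `n = 2m + 3`.
A zero `z` of `g` in the unit disc satisfies `z² = (1 + zⁿ)/2`, so it is a fixed point of
`w ↦ s √((1 + wⁿ)/2)` for a sign `s = ±1`; the principal square root is holomorphic there since
`Re (1 + wⁿ) > 0`. These zeros lie in `|z| < 9/10`, and both maps send that disc into a strictly
smaller one, so by the Schwarz–Pick lemma each has at most one fixed point, at which its
derivative has modulus `< 1`. A double zero of `g` would force that derivative to be `1`, so `g`
has at most two zeros in the disc, and the intermediate value theorem gives one in `(-1, 0)` and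
one in `(0, 9/10)`. On the unit circle `2z² = 1 + zⁿ` forces `zⁿ = 1 = z²`, hence `z = 1` as `n`
is odd, and `h(1) = 4 - n ≠ 0`. -/

open Polynomial

open Metric Set Function Complex ComplexConjugate

noncomputable def mobius (p z : ℂ) : ℂ := (p - z) / (1 - conj p * z)

section Mobius

variable {p z : ℂ}

lemma normSq_one_sub_conj_mul_sub_normSq_sub (p z : ℂ) :
    normSq (1 - conj p * z) - normSq (p - z) = (1 - normSq p) * (1 - normSq z) := by
  simp only [normSq_apply, sub_re, sub_im, mul_re, mul_im, conj_re, conj_im, one_re, one_im]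
  ring

lemma normSq_lt_one_of_norm_lt_one (hz : ‖z‖ < 1) : normSq z < 1 := by
  rw [← Complex.sq_norm]; nlinarith [norm_nonneg z]

lemma one_sub_conj_mul_ne_zero (hp : ‖p‖ < 1) (hz : ‖z‖ < 1) : 1 - conj p * z ≠ 0 := by
  intro h
  have : ‖conj p * z‖ = 1 := by rw [← sub_eq_zero.1 h, norm_one]
  rw [norm_mul, RCLike.norm_conj] at this
  nlinarith [norm_nonneg p, norm_nonneg z]

lemma mobius_zero (p : ℂ) : mobius p 0 = p := by simp [mobius]

lemma mobius_self (p : ℂ) : mobius p p = 0 := by simp [mobius]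

lemma normSq_mobius_le (hp : ‖p‖ < 1) {ρ : ℝ} (hρ : ρ < 1) (hz : ‖z‖ ≤ ρ) :
    normSq (mobius p z) ≤ 1 - (1 - normSq p) * (1 - ρ ^ 2) / 4 := by
  have hz1 : ‖z‖ < 1 := hz.trans_lt hρ
  have hid := normSq_one_sub_conj_mul_sub_normSq_sub p z
  set D := 1 - conj p * z
  have hD : 0 < normSq D := normSq_pos.2 (one_sub_conj_mul_ne_zero hp hz1)
  have hD4 : normSq D ≤ 4 := by
    have : ‖D‖ ≤ 2 := calc
      ‖D‖ ≤ ‖(1 : ℂ)‖ + ‖conj p * z‖ := norm_sub_le _ _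
      _ ≤ 2 := by
        rw [norm_one, norm_mul, RCLike.norm_conj]
        nlinarith [norm_nonneg p, norm_nonneg z]
    rw [← Complex.sq_norm]; nlinarith [norm_nonneg D]
  have hzρ : normSq z ≤ ρ ^ 2 := by rw [← Complex.sq_norm]; nlinarith [norm_nonneg z]
  have hρ1 : 0 ≤ 1 - ρ ^ 2 := by nlinarith [norm_nonneg z]
  have hp1 := sub_nonneg.2 (normSq_lt_one_of_norm_lt_one hp).le
  rw [mobius, normSq_div, div_le_iff₀ hD]
  nlinarith [mul_nonneg hp1 (sub_nonneg.2 hzρ), mul_nonneg (mul_nonneg hp1 hρ1) (sub_nonneg.2 hD4)]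

lemma norm_mobius_lt_one (hp : ‖p‖ < 1) (hz : ‖z‖ < 1) : ‖mobius p z‖ < 1 := by
  have h := normSq_mobius_le hp hz le_rfl
  have hp1 := normSq_lt_one_of_norm_lt_one hp
  have : 0 < (1 - normSq p) * (1 - ‖z‖ ^ 2) := mul_pos (by linarith) (by nlinarith [norm_nonneg z])
  rw [← Complex.sq_norm] at h
  nlinarith [norm_nonneg (mobius p z)]

lemma mobius_mobius (hp : ‖p‖ < 1) (hz : ‖z‖ < 1) : mobius p (mobius p z) = z := by
  have hD : 1 - z * conj p ≠ 0 := by rw [mul_comm]; exact one_sub_conj_mul_ne_zero hp hz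
  have hD' := one_sub_conj_mul_ne_zero hp (norm_mobius_lt_one hp hz)
  unfold mobius at hD' ⊢
  rw [div_eq_iff hD']
  field_simp
  ring

lemma hasDerivAt_mobius (hp : ‖p‖ < 1) (hz : ‖z‖ < 1) :
    HasDerivAt (mobius p) ((conj p * p - 1) / (1 - conj p * z) ^ 2) z := by
  have hnum : HasDerivAt (fun z => p - z) (-1) z := (hasDerivAt_id z).const_sub p
  have hden : HasDerivAt (fun z => 1 - conj p * z) (-conj p) z := by
    simpa using ((hasDerivAt_id z).const_mul (conj p)).const_sub 1
  exact (hnum.div hden (one_sub_conj_mul_ne_zero hp hz)).congr_deriv (by ring)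

end Mobius

section FixedPoint

variable {Φ : ℂ → ℂ} {ρ : ℝ} {p : ℂ}

/-- Conjugating by `mobius p` moves the fixed point `p` to `0`, where Schwarz's lemma applies;
the image of `Φ` lying in a smaller disc makes the bound strict. -/
lemma exists_norm_dslope_mobius_conj_le (hρ : ρ < 1) (hd : DifferentiableOn ℂ Φ (ball 0 1))
    (hmaps : MapsTo Φ (ball 0 1) (closedBall 0 ρ)) (hp : ‖p‖ < 1) (hfix : IsFixedPt Φ p) :
    ∃ c < 1, ∀ z ∈ ball (0 : ℂ) 1, ‖dslope (mobius p ∘ Φ ∘ mobius p) 0 z‖ ≤ c := by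
  have hΦ : ∀ w, ‖w‖ < 1 → ‖Φ w‖ ≤ ρ := fun w hw =>
    mem_closedBall_zero_iff.1 (hmaps (mem_ball_zero_iff.2 hw))
  have hρ0 : 0 ≤ ρ := (norm_nonneg _).trans (hΦ p hp)
  set δ := (1 - normSq p) * (1 - ρ ^ 2) / 4
  have hδ : 0 < δ := by
    have := normSq_lt_one_of_norm_lt_one hp
    have : 0 < 1 - ρ ^ 2 := by nlinarith
    positivity
  refine ⟨1 - δ / 2, by linarith, fun z hz => ?_⟩
  have hK0 : (mobius p ∘ Φ ∘ mobius p) 0 = 0 := by simp [mobius_zero, hfix.eq, mobius_self]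
  have hKd : DifferentiableOn ℂ (mobius p ∘ Φ ∘ mobius p) (ball 0 1) := by
    intro w hw
    rw [mem_ball_zero_iff] at hw
    have hw' := norm_mobius_lt_one hp hw
    have h1 := (hasDerivAt_mobius hp hw).differentiableAt
    have h2 := hd.differentiableAt (isOpen_ball.mem_nhds (mem_ball_zero_iff.2 hw'))
    have h3 := (hasDerivAt_mobius hp ((hΦ _ hw').trans_lt hρ)).differentiableAt
    exact (h3.comp w (h2.comp w h1)).differentiableWithinAt
  have hKmaps : MapsTo (mobius p ∘ Φ ∘ mobius p) (ball 0 1)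
      (closedBall ((mobius p ∘ Φ ∘ mobius p) 0) (1 - δ / 2)) := by
    intro w hw
    rw [hK0, mem_closedBall_zero_iff]
    have h : ‖mobius p (Φ (mobius p w))‖ ^ 2 ≤ 1 - δ := by
      rw [Complex.sq_norm]
      exact normSq_mobius_le hp hρ (hΦ _ (norm_mobius_lt_one hp (mem_ball_zero_iff.1 hw)))
    change ‖mobius p (Φ (mobius p w))‖ ≤ 1 - δ / 2
    nlinarith [norm_nonneg (mobius p (Φ (mobius p w)))]
  simpa using norm_dslope_le_div_of_mapsTo_ball hKd hKmaps hz

theorem eq_of_isFixedPt_of_mapsTo_ball_one (hρ : ρ < 1) (hd : DifferentiableOn ℂ Φ (ball 0 1))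
    (hmaps : MapsTo Φ (ball 0 1) (closedBall 0 ρ)) (hp : ‖p‖ < 1) (hpfix : IsFixedPt Φ p) {q : ℂ}
    (hq : ‖q‖ < 1) (hqfix : IsFixedPt Φ q) : q = p := by
  obtain ⟨c, hc, hK⟩ := exists_norm_dslope_mobius_conj_le hρ hd hmaps hp hpfix
  by_contra hne
  set w := mobius p q
  have hw0 : w ≠ 0 := fun h => hne <| calc
    q = mobius p w := (mobius_mobius hp hq).symm
    _ = p := by rw [h, mobius_zero]
  have hKw : (mobius p ∘ Φ ∘ mobius p) w = w := by
    simp only [Function.comp_apply, w, mobius_mobius hp hq, hqfix.eq]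
  have hK0 : (mobius p ∘ Φ ∘ mobius p) 0 = 0 := by simp [mobius_zero, hpfix.eq, mobius_self]
  have := hK w (mem_ball_zero_iff.2 (norm_mobius_lt_one hp hq))
  rw [dslope_of_ne _ hw0, slope_def_field, hKw, hK0, sub_zero, div_self hw0,
    norm_one] at this
  linarith

theorem norm_lt_one_of_hasDerivAt_of_isFixedPt_one (hρ : ρ < 1)
    (hd : DifferentiableOn ℂ Φ (ball 0 1)) (hmaps : MapsTo Φ (ball 0 1) (closedBall 0 ρ))
    (hp : ‖p‖ < 1) (hfix : IsFixedPt Φ p) {d : ℂ} (hΦ : HasDerivAt Φ d p) : ‖d‖ < 1 := by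
  obtain ⟨c, hc, hK⟩ := exists_norm_dslope_mobius_conj_le hρ hd hmaps hp hfix
  have hpp := one_sub_conj_mul_ne_zero hp hp
  have h0 : HasDerivAt (mobius p) (conj p * p - 1) 0 := by
    simpa using hasDerivAt_mobius hp (z := 0) (by simp)
  have hp' :
      HasDerivAt (mobius p) ((conj p * p - 1) / (1 - conj p * p) ^ 2) (Φ (mobius p 0)) := by
    rw [mobius_zero, hfix.eq]; exact hasDerivAt_mobius hp hp
  have hΦ' : HasDerivAt Φ d (mobius p 0) := by rwa [mobius_zero]
  have hKd : HasDerivAt (mobius p ∘ Φ ∘ mobius p) d 0 := by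
    refine (hp'.comp 0 (hΦ'.comp 0 h0)).congr_deriv ?_
    rw [div_mul_eq_mul_div, div_eq_iff (pow_ne_zero 2 hpp)]
    ring
  have := hK 0 (mem_ball_self one_pos)
  rw [dslope_same, hKd.deriv] at this
  linarith

variable {R : ℝ}

lemma differentiableOn_rescale (hR : 0 < R) (hd : DifferentiableOn ℂ Φ (ball 0 R)) :
    DifferentiableOn ℂ (fun w => Φ (R * w) / R) (ball 0 1) := by
  refine DifferentiableOn.div_const (hd.comp (by fun_prop) fun w hw => ?_) _
  rw [mem_ball_zero_iff] at hw ⊢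
  rw [norm_mul, Complex.norm_real, Real.norm_of_nonneg hR.le]
  nlinarith

lemma mapsTo_rescale (hR : 0 < R) (hmaps : MapsTo Φ (ball 0 R) (closedBall 0 ρ)) :
    MapsTo (fun w => Φ (R * w) / R) (ball 0 1) (closedBall 0 (ρ / R)) := by
  intro w hw
  rw [mem_ball_zero_iff] at hw
  have hRw : (R : ℂ) * w ∈ ball 0 R := by
    rw [mem_ball_zero_iff, norm_mul, Complex.norm_real, Real.norm_of_nonneg hR.le]
    nlinarith
  have := mem_closedBall_zero_iff.1 (hmaps hRw)
  rw [mem_closedBall_zero_iff, norm_div, Complex.norm_real, Real.norm_of_nonneg hR.le]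
  gcongr

lemma isFixedPt_rescale (hR : 0 < R) (hp : IsFixedPt Φ p) :
    IsFixedPt (fun w => Φ (R * w) / R) (p / R) := by
  have : (R : ℂ) ≠ 0 := by exact_mod_cast hR.ne'
  simp only [IsFixedPt, mul_div_cancel₀ _ this, hp.eq]

theorem eq_of_isFixedPt_of_mapsTo_ball (hρ : ρ < R) (hd : DifferentiableOn ℂ Φ (ball 0 R))
    (hmaps : MapsTo Φ (ball 0 R) (closedBall 0 ρ)) (hp : ‖p‖ < R) (hpfix : IsFixedPt Φ p)
    {q : ℂ} (hq : ‖q‖ < R) (hqfix : IsFixedPt Φ q) : q = p := by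
  have hR : 0 < R := (norm_nonneg p).trans_lt hp
  have hR' : (R : ℂ) ≠ 0 := by exact_mod_cast hR.ne'
  have hnorm : ∀ z : ℂ, ‖z‖ < R → ‖z / R‖ < 1 := fun z hz => by
    rwa [norm_div, Complex.norm_real, Real.norm_of_nonneg hR.le, div_lt_one hR]
  have := eq_of_isFixedPt_of_mapsTo_ball_one ((div_lt_one hR).2 hρ)
    (differentiableOn_rescale hR hd) (mapsTo_rescale hR hmaps) (hnorm p hp)
    (isFixedPt_rescale hR hpfix) (hnorm q hq) (isFixedPt_rescale hR hqfix)
  exact (div_left_inj' hR').1 this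

theorem norm_lt_one_of_hasDerivAt_of_isFixedPt (hρ : ρ < R)
    (hd : DifferentiableOn ℂ Φ (ball 0 R)) (hmaps : MapsTo Φ (ball 0 R) (closedBall 0 ρ))
    (hp : ‖p‖ < R) (hfix : IsFixedPt Φ p) {d : ℂ} (hΦ : HasDerivAt Φ d p) : ‖d‖ < 1 := by
  have hR : 0 < R := (norm_nonneg p).trans_lt hp
  have hR' : (R : ℂ) ≠ 0 := by exact_mod_cast hR.ne'
  have hpR : ‖p / R‖ < 1 := by
    rwa [norm_div, Complex.norm_real, Real.norm_of_nonneg hR.le, div_lt_one hR]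
  have hΦ' : HasDerivAt Φ d (R * (p / R)) := by rwa [mul_div_cancel₀ _ hR']
  have hΨ : HasDerivAt (fun w => Φ (R * w) / R) d (p / R) := by
    have := (hΦ'.comp (p / R) ((hasDerivAt_id (p / R)).const_mul (R : ℂ))).div_const (R : ℂ)
    refine this.congr_deriv ?_
    field_simp
  exact norm_lt_one_of_hasDerivAt_of_isFixedPt_one ((div_lt_one hR).2 hρ)
    (differentiableOn_rescale hR hd) (mapsTo_rescale hR hmaps) hpR (isFixedPt_rescale hR hfix) hΨ

end FixedPoint

noncomputable def littlewoodNumerator (n : ℕ) : ℂ[X] := 1 - C 2 * X ^ 2 + X ^ n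

section LittlewoodNumerator

variable {n : ℕ} {z : ℂ}

lemma eval_littlewoodNumerator (n : ℕ) (z : ℂ) :
    (littlewoodNumerator n).eval z = 1 - 2 * z ^ 2 + z ^ n := by
  simp [littlewoodNumerator]

lemma eval_derivative_littlewoodNumerator (n : ℕ) (z : ℂ) :
    (derivative (littlewoodNumerator n)).eval z = -4 * z + n * z ^ (n - 1) := by
  simp [littlewoodNumerator, derivative_X_pow]
  ring

lemma littlewoodNumerator_ne_zero (hn : n ≠ 0) : littlewoodNumerator n ≠ 0 := fun h => by
  simpa [eval_littlewoodNumerator, zero_pow hn] using congrArg (Polynomial.eval 0) h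

lemma isRoot_littlewoodNumerator_iff :
    (littlewoodNumerator n).IsRoot z ↔ 2 * z ^ 2 = 1 + z ^ n := by
  rw [IsRoot, eval_littlewoodNumerator, ← sub_eq_zero (a := 2 * z ^ 2)]
  constructor <;> intro h <;> linear_combination -h

lemma ne_zero_of_isRoot_littlewoodNumerator (hn : n ≠ 0)
    (hz : (littlewoodNumerator n).IsRoot z) : z ≠ 0 := by
  rintro rfl
  simp [littlewoodNumerator, zero_pow hn] at hz

lemma norm_one_add_pow_le (hn : 5 ≤ n) (hz : ‖z‖ < 1) : ‖1 + z ^ n‖ ≤ 1 + ‖z‖ ^ 5 := calc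
  ‖1 + z ^ n‖ ≤ 1 + ‖z‖ ^ n := by simpa using norm_add_le (1 : ℂ) (z ^ n)
  _ ≤ 1 + ‖z‖ ^ 5 := add_le_add_right (pow_le_pow_of_le_one (norm_nonneg z) hz.le hn) 1

lemma norm_lt_of_isRoot_littlewoodNumerator (hn : 5 ≤ n) (hz : ‖z‖ < 1)
    (hroot : (littlewoodNumerator n).IsRoot z) : ‖z‖ < 9 / 10 := by
  set t := ‖z‖
  have ht : 0 ≤ t := norm_nonneg z
  have h : 2 * t ^ 2 ≤ 1 + t ^ 5 := calc
    2 * t ^ 2 = ‖1 + z ^ n‖ := by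
      rw [← isRoot_littlewoodNumerator_iff.1 hroot, norm_mul, norm_pow, Complex.norm_two]
    _ ≤ 1 + t ^ 5 := norm_one_add_pow_le hn hz
  by_contra! h9
  -- `1 - 2t² + t⁵ = (1 - t)(1 + t - t² - t³ - t⁴)`, whose second factor is negative for `t ≥ 9/10`
  nlinarith [mul_le_mul h9 h9 (by norm_num) ht, pow_le_pow_left₀ (by norm_num) h9 3,
    pow_le_pow_left₀ (by norm_num) h9 4, mul_pos (sub_pos.2 hz) (sub_pos.2 hz)]

end LittlewoodNumerator

noncomputable def sqrtMean (n : ℕ) (z : ℂ) : ℂ := Complex.sqrt ((1 + z ^ n) / 2)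

section SqrtMean

variable {n : ℕ} {z : ℂ}

lemma sqrtMean_sq (n : ℕ) (z : ℂ) : sqrtMean n z ^ 2 = (1 + z ^ n) / 2 := by
  simp [sqrtMean, Complex.sqrt]

lemma differentiableAt_sqrtMean (hn : n ≠ 0) (hz : ‖z‖ < 1) :
    DifferentiableAt ℂ (sqrtMean n) z := by
  have hre : 0 < ((1 + z ^ n) / 2).re := by
    have h1 : ‖z ^ n‖ < 1 := by rw [norm_pow]; exact pow_lt_one₀ (norm_nonneg z) hz hn
    have h2 := neg_abs_le (z ^ n).re
    have h3 := Complex.abs_re_le_norm (z ^ n)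
    simp only [div_ofNat_re, add_re, one_re]
    linarith
  exact (differentiableAt_sqrt (Or.inl hre)).comp z (by fun_prop)

lemma differentiableOn_mul_sqrtMean (hn : n ≠ 0) (s : ℂ) :
    DifferentiableOn ℂ (fun w => s * sqrtMean n w) (ball 0 1) := fun _ hw =>
  ((differentiableAt_sqrtMean hn (mem_ball_zero_iff.1 hw)).const_mul s).differentiableWithinAt

lemma norm_sqrtMean_sq_le (hn : 5 ≤ n) (hz : ‖z‖ < 1) :
    ‖sqrtMean n z‖ ^ 2 ≤ (1 + ‖z‖ ^ 5) / 2 := by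
  rw [← norm_pow, sqrtMean_sq, norm_div, Complex.norm_two]
  gcongr
  exact norm_one_add_pow_le hn hz

-- `(1 + (9/10)⁵) / 2 < (179/200)²`, and `179/200 < 9/10`
lemma mapsTo_mul_sqrtMean (hn : 5 ≤ n) {s : ℂ} (hs : ‖s‖ = 1) :
    MapsTo (fun w => s * sqrtMean n w) (ball 0 (9 / 10)) (closedBall 0 (179 / 200)) := by
  intro w hw
  rw [mem_ball_zero_iff] at hw
  rw [mem_closedBall_zero_iff, norm_mul, hs, one_mul]
  have h := norm_sqrtMean_sq_le hn (hw.trans (by norm_num))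
  have h5 : ‖w‖ ^ 5 ≤ (9 / 10) ^ 5 := pow_le_pow_left₀ (norm_nonneg w) hw.le 5
  nlinarith [norm_nonneg (sqrtMean n w)]

end SqrtMean

section Roots

variable {n : ℕ} {z : ℂ}

lemma sqrtMean_div_sq (hn : n ≠ 0) (hroot : (littlewoodNumerator n).IsRoot z) :
    (sqrtMean n z / z) ^ 2 = 1 := by
  have hz := ne_zero_of_isRoot_littlewoodNumerator hn hroot
  rw [div_pow, sqrtMean_sq, div_eq_one_iff_eq (pow_ne_zero 2 hz)]
  linear_combination -(isRoot_littlewoodNumerator_iff.1 hroot) / 2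

lemma isFixedPt_mul_sqrtMean (hn : n ≠ 0) (hroot : (littlewoodNumerator n).IsRoot z) :
    IsFixedPt (fun w => sqrtMean n z / z * sqrtMean n w) z := by
  have hz := ne_zero_of_isRoot_littlewoodNumerator hn hroot
  have hs := sqrtMean_div_sq hn hroot
  change sqrtMean n z / z * sqrtMean n z = z
  field_simp at hs ⊢
  linear_combination hs

lemma norm_sqrtMean_div (hn : n ≠ 0) (hroot : (littlewoodNumerator n).IsRoot z) :
    ‖sqrtMean n z / z‖ = 1 := by
  have h := congrArg (‖·‖) (sqrtMean_div_sq hn hroot)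
  simp only [norm_pow, norm_one] at h
  exact (pow_eq_one_iff_of_nonneg (norm_nonneg _) two_ne_zero).1 h

lemma eq_of_sqrtMean_div_eq (hn : 5 ≤ n) {w : ℂ} (hz : ‖z‖ < 1) (hw : ‖w‖ < 1)
    (hzroot : (littlewoodNumerator n).IsRoot z) (hwroot : (littlewoodNumerator n).IsRoot w)
    (h : sqrtMean n z / z = sqrtMean n w / w) : z = w := by
  have hn0 : n ≠ 0 := by omega
  refine (eq_of_isFixedPt_of_mapsTo_ball (by norm_num : (179 / 200 : ℝ) < 9 / 10)
    ((differentiableOn_mul_sqrtMean hn0 _).mono (ball_subset_ball (by norm_num)))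
    (mapsTo_mul_sqrtMean hn (norm_sqrtMean_div hn0 hzroot))
    (norm_lt_of_isRoot_littlewoodNumerator hn hz hzroot) (isFixedPt_mul_sqrtMean hn0 hzroot)
    (norm_lt_of_isRoot_littlewoodNumerator hn hw hwroot)
    (h ▸ isFixedPt_mul_sqrtMean hn0 hwroot)).symm

/-- At a root `z`, the fixed-point map `w ↦ s * sqrtMean n w` squares to `(1 + wⁿ) / 2`, so a
double root would give it derivative `1` at `z`, which Schwarz's lemma excludes. -/
lemma not_isRoot_derivative_littlewoodNumerator (hn : 5 ≤ n) (hz : ‖z‖ < 1)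
    (hroot : (littlewoodNumerator n).IsRoot z) :
    ¬(derivative (littlewoodNumerator n)).IsRoot z := by
  intro hder
  have hn0 : n ≠ 0 := by omega
  set s := sqrtMean n z / z
  set Φ := fun w => s * sqrtMean n w
  have hz0 := ne_zero_of_isRoot_littlewoodNumerator hn0 hroot
  have hfix : IsFixedPt Φ z := isFixedPt_mul_sqrtMean hn0 hroot
  have hΦ : HasDerivAt Φ (deriv Φ z) z :=
    ((differentiableAt_sqrtMean hn0 hz).const_mul s).hasDerivAt
  have hsq : Φ ^ 2 = fun w => (1 + w ^ n) / 2 := by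
    funext w
    rw [Pi.pow_apply, mul_pow, sqrtMean_sq, sqrtMean_div_sq hn0 hroot, one_mul]
  have hderiv : 2 * z * deriv Φ z = n * z ^ (n - 1) / 2 := by
    have h1 := hΦ.pow 2
    rw [hsq, hfix.eq] at h1
    have h2 : HasDerivAt (fun w : ℂ => (1 + w ^ n) / 2) (n * z ^ (n - 1) / 2) z :=
      ((hasDerivAt_pow n z).const_add 1).div_const 2
    rw [h2.unique h1]
    norm_num
  have hone : deriv Φ z = 1 := by
    rw [IsRoot, eval_derivative_littlewoodNumerator] at hder
    apply mul_left_cancel₀ (mul_ne_zero two_ne_zero hz0)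
    linear_combination hderiv + hder / 2
  have := norm_lt_one_of_hasDerivAt_of_isFixedPt (by norm_num : (179 / 200 : ℝ) < 9 / 10)
    ((differentiableOn_mul_sqrtMean hn0 _).mono (ball_subset_ball (by norm_num)))
    (mapsTo_mul_sqrtMean hn (norm_sqrtMean_div hn0 hroot))
    (norm_lt_of_isRoot_littlewoodNumerator hn hz hroot) hfix hΦ
  rw [hone, norm_one] at this
  exact lt_irrefl _ this

lemma rootMultiplicity_littlewoodNumerator_le_one (hn : 5 ≤ n) (hz : ‖z‖ < 1) :
    (littlewoodNumerator n).rootMultiplicity z ≤ 1 := by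
  by_contra! h
  obtain ⟨hroot, hder⟩ :=
    (one_lt_rootMultiplicity_iff_isRoot (littlewoodNumerator_ne_zero (by omega))).1 h
  exact not_isRoot_derivative_littlewoodNumerator hn hz hroot hder

lemma nodup_roots_filter_littlewoodNumerator (hn : 5 ≤ n) :
    ((littlewoodNumerator n).roots.filter (fun z => ‖z‖ < 1)).Nodup := by
  rw [Multiset.nodup_iff_count_le_one]
  intro z
  rw [Multiset.count_filter, count_roots]
  split_ifs with hz
  · exact rootMultiplicity_littlewoodNumerator_le_one hn hz
  · exact zero_le_one

/-- The sign `sqrtMean n z / z ∈ {1, -1}` is injective on the roots in the disc. -/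
theorem card_roots_filter_littlewoodNumerator_le (hn : 5 ≤ n) :
    ((littlewoodNumerator n).roots.filter (fun z => ‖z‖ < 1)).card ≤ 2 := by
  have hn0 : n ≠ 0 := by omega
  set S := (littlewoodNumerator n).roots.filter (fun z => ‖z‖ < 1)
  have hmem : ∀ z ∈ S.toFinset, ‖z‖ < 1 ∧ (littlewoodNumerator n).IsRoot z := fun z hz => by
    obtain ⟨hroot, hz⟩ := Multiset.mem_filter.1 (Multiset.mem_toFinset.1 hz)
    exact ⟨hz, (mem_roots (littlewoodNumerator_ne_zero hn0)).1 hroot⟩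
  rw [← Multiset.toFinset_card_of_nodup (nodup_roots_filter_littlewoodNumerator hn)]
  calc S.toFinset.card ≤ ({1, -1} : Finset ℂ).card := by
        refine Finset.card_le_card_of_injOn (fun z => sqrtMean n z / z) (fun z hz => ?_)
          fun z hz w hw h => eq_of_sqrtMean_div_eq hn (hmem z hz).1 (hmem w hw).1
            (hmem z hz).2 (hmem w hw).2 h
        simpa using sqrtMean_div_sq hn0 (hmem z hz).2
    _ = 2 := Finset.card_pair (by norm_num)

theorem two_le_card_roots_filter_littlewoodNumerator (hn : 5 ≤ n) (hodd : Odd n) :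
    2 ≤ ((littlewoodNumerator n).roots.filter (fun z => ‖z‖ < 1)).card := by
  set f : ℝ → ℝ := fun t => 1 - 2 * t ^ 2 + t ^ n
  have hf : ContinuousOn f (Icc (-1) 1) := by fun_prop
  have hf0 : f 0 = 1 := by simp [f, zero_pow (by omega : n ≠ 0)]
  have hf1 : f (-1) < 0 := by simp [f, hodd.neg_one_pow]
  have hf9 : f (9 / 10) < 0 := by
    have : (9 / 10 : ℝ) ^ n ≤ (9 / 10) ^ 5 := pow_le_pow_of_le_one (by norm_num) (by norm_num) hn
    simp only [f]; linarith
  obtain ⟨x, hx, hfx⟩ := intermediate_value_Ioo (by norm_num : (-1 : ℝ) ≤ 0)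
    (hf.mono (Icc_subset_Icc le_rfl (by norm_num)))
    (show (0 : ℝ) ∈ Ioo (f (-1)) (f 0) by rw [hf0]; exact ⟨hf1, one_pos⟩)
  obtain ⟨y, hy, hfy⟩ := intermediate_value_Ioo' (by norm_num : (0 : ℝ) ≤ 9 / 10)
    (hf.mono (Icc_subset_Icc (by norm_num) (by norm_num)))
    (show (0 : ℝ) ∈ Ioo (f (9 / 10)) (f 0) by rw [hf0]; exact ⟨hf9, one_pos⟩)
  have hmem : ∀ t : ℝ, f t = 0 → -1 < t → t < 1 →
      (t : ℂ) ∈ ((littlewoodNumerator n).roots.filter (fun z => ‖z‖ < 1)).toFinset := by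
    intro t hft ht₁ ht₂
    rw [Multiset.mem_toFinset, Multiset.mem_filter,
      mem_roots (littlewoodNumerator_ne_zero (by omega)), IsRoot, eval_littlewoodNumerator,
      Complex.norm_real, Real.norm_eq_abs]
    exact ⟨by exact_mod_cast hft, abs_lt.2 ⟨ht₁, ht₂⟩⟩
  calc 2 = ({(x : ℂ), (y : ℂ)} : Finset ℂ).card :=
        (Finset.card_pair (by exact_mod_cast (hx.2.trans hy.1).ne)).symm
    _ ≤ _ := Finset.card_le_card <| Finset.insert_subset (hmem x hfx hx.1 (hx.2.trans one_pos))
        (Finset.singleton_subset_iff.2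
          (hmem y hfy (neg_one_lt_zero.trans hy.1) (hy.2.trans (by norm_num))))
    _ ≤ _ := Multiset.toFinset_card_le _

lemma eq_one_of_isRoot_littlewoodNumerator (hodd : Odd n) (hz : ‖z‖ = 1)
    (hroot : (littlewoodNumerator n).IsRoot z) : z = 1 := by
  have h := isRoot_littlewoodNumerator_iff.1 hroot
  have hzn : ‖z ^ n‖ = 1 := by rw [norm_pow, hz, one_pow]
  have hpow : z ^ n = 1 := by
    refine (eq_of_norm_eq_of_norm_add_eq (x := (1 : ℂ)) (by rw [norm_one, hzn]) ?_).symm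
    rw [← h, norm_mul, norm_pow, hz, norm_one, hzn]
    norm_num
  have hsq : z ^ 2 = 1 := by linear_combination (h + hpow) / 2
  rcases sq_eq_one_iff.1 hsq with h1 | h1
  · exact h1
  · rw [h1, hodd.neg_one_pow] at hpow
    norm_num at hpow

end Roots

lemma roots_one_sub_X_mul {R : Type*} [CommRing R] [IsDomain R] {h : R[X]} (hh : h ≠ 0) :
    ((1 - X) * h).roots = 1 ::ₘ h.roots := by
  have h1X : (1 - X : R[X]) = -(X - C 1) := by rw [map_one]; ring
  rw [roots_mul (mul_ne_zero (by rw [h1X]; exact neg_ne_zero.2 (X_sub_C_ne_zero 1)) hh), h1X,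
    roots_neg, roots_X_sub_C, Multiset.singleton_add]

lemma eval_one_eq_neg_eval_derivative_one_sub_X_mul {R : Type*} [CommRing R] (h : R[X]) :
    h.eval 1 = -(derivative ((1 - X) * h)).eval 1 := by
  simp [derivative_mul]

theorem stmt_18 (m : ℕ) (hm : 1 ≤ m) (h : Polynomial ℂ)
    (hdef : (1 - X) * h = 1 - C 2 * X ^ 2 + X ^ (3 + 2 * m)) :
    diskZeros h = 2 ∧ ∀ z : ℂ, ‖z‖ = 1 → h.eval z ≠ 0 := by
  have hn : 5 ≤ 3 + 2 * m := by omega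
  have hodd : Odd (3 + 2 * m) := ⟨m + 1, by ring⟩
  change (1 - X) * h = littlewoodNumerator (3 + 2 * m) at hdef
  have hh : h ≠ 0 := by
    rintro rfl
    exact littlewoodNumerator_ne_zero (by omega : 3 + 2 * m ≠ 0) (by simpa using hdef.symm)
  constructor
  · have hroots := roots_one_sub_X_mul hh
    rw [hdef] at hroots
    rw [diskZeros, ← le_antisymm (card_roots_filter_littlewoodNumerator_le hn)
      (two_le_card_roots_filter_littlewoodNumerator hn hodd), hroots,
      Multiset.filter_cons_of_neg _ (by simp)]
  · intro z hz hzero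
    have hroot : (littlewoodNumerator (3 + 2 * m)).IsRoot z := by
      rw [IsRoot, ← hdef, eval_mul, hzero, mul_zero]
    obtain rfl := eq_one_of_isRoot_littlewoodNumerator hodd hz hroot
    rw [eval_one_eq_neg_eval_derivative_one_sub_X_mul, hdef, eval_derivative_littlewoodNumerator,
      one_pow, mul_one, mul_one, neg_eq_zero, neg_add_eq_zero] at hzero
    have : 3 + 2 * m = 4 := by exact_mod_cast hzero.symm
    omega
end
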